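/- If x, y are permutations of [n] with x ≥_B y in Bruhat order and y avoids the pattern 213, then x ⊵_R y. -/

import Mathlib

/-- `o` is the outcome of running parking Algorithm A on preference vector `a`:
car `i` parks in the first unoccupied spot in `[a i, n]`, and every car parks. -/
def IsAOutcome {n : ℕ} (a o : Fin n → Fin n) : Prop :=
  Function.Injective o ∧ ∀ i, a i ≤ o i ∧
    ∀ s, a i ≤ s → s < o i → ∃ j, j < i ∧ o j = s

/-- `a` is a parking function. -/
def IsParkingFunction {n : ℕ} (a : Fin n → Fin n) : Prop :=
  ∃ o, IsAOutcome a o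

/-- `o` is the outcome of running parking Algorithm B on the pair `(a, b)`:
car `i` parks in the first unoccupied spot in `[a i, b i]`, and every car parks. -/
def IsBOutcome {n : ℕ} (a b o : Fin n → Fin n) : Prop :=
  Function.Injective o ∧ ∀ i, a i ≤ o i ∧ o i ≤ b i ∧
    ∀ s, a i ≤ s → s < o i → ∃ j, j < i ∧ o j = s

/-- `(a, b)` is an interval parking function. -/
def IsIPF {n : ℕ} (a b : Fin n → Fin n) : Prop :=
  ∃ o, IsBOutcome a b o

/-- The conjugate (reverse complement) `x*` of `x`, with `x*(i) = n + 1 - x(n + 1 - i)`. -/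
def pconj {n : ℕ} (f : Fin n → Fin n) : Fin n → Fin n :=
  fun i => (f i.rev).rev

/-- The pair `(x, y)` is reachable, `x ⊵_R y`: there is an IPF `(a, b)` with
`O(a) = x` and `O(b*) = y*`. -/
def Reaches {n : ℕ} (x y : Fin n → Fin n) : Prop :=
  ∃ a b : Fin n → Fin n, IsIPF a b ∧ IsAOutcome a x ∧ IsAOutcome (pconj b) (pconj y)

/-- Pseudoreachability `x ≥_P y`: the reflexive-transitive closure of reachability. -/
def PseudoGE {n : ℕ} (x y : Equiv.Perm (Fin n)) : Prop :=
  Relation.ReflTransGen (fun u v : Equiv.Perm (Fin n) => Reaches ⇑u ⇑v) x y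

/-- `#{k ∈ [i] : x(k) ≥ j}` (with `i`, `j` zero-indexed). -/
def bcount {n : ℕ} (x : Fin n → Fin n) (i j : Fin n) : ℕ :=
  (Finset.univ.filter (fun k : Fin n => k ≤ i ∧ j ≤ x k)).card

/-- The Bruhat order `x ≥_B y` on the symmetric group. -/
def BruhatGE {n : ℕ} (x y : Equiv.Perm (Fin n)) : Prop :=
  ∀ i j : Fin n, bcount ⇑y i j ≤ bcount ⇑x i j

/-- The number of inversions (the Coxeter length) of `f`. -/
def invCount {n : ℕ} (f : Fin n → Fin n) : ℕ :=
  (Finset.univ.filter (fun p : Fin n × Fin n => p.1 < p.2 ∧ f p.2 < f p.1)).card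

/-- The adjacent transposition `s_i` exchanging `i` and `i+1` (one-indexed),
as a permutation of `Fin n`. -/
def sgen (n : ℕ) (i : ℕ) : Equiv.Perm (Fin n) :=
  if h : 1 ≤ i ∧ i < n then Equiv.swap ⟨i - 1, by omega⟩ ⟨i, h.2⟩ else 1

/-- Left weak order: `x ≥_W y` iff `x = s_{i₁} ⋯ s_{i_k} · y` with `ℓ(x) = ℓ(y) + k`. -/
def WeakGE {n : ℕ} (x y : Equiv.Perm (Fin n)) : Prop :=
  ∃ l : List ℕ, (∀ i ∈ l, 1 ≤ i ∧ i ≤ n - 1) ∧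
    x = (l.map (sgen n)).prod * y ∧ invCount ⇑x = invCount ⇑y + l.length

/-- The projection `x ↦ x̂` deleting the last position and the value `x(n)`. -/
def hatf {n : ℕ} (x : Fin (n + 1) → Fin (n + 1)) : Fin n → Fin n :=
  fun i =>
    if h : (x i.castSucc).val < (x (Fin.last n)).val
    then ⟨(x i.castSucc).val, by have h1 := (x (Fin.last n)).isLt; omega⟩
    else ⟨(x i.castSucc).val - 1, by have h1 := (x i.castSucc).isLt; have h2 := i.isLt; omega⟩

/-- `lam n f k` is `λ_k` of the permutation of `[n]` with one-line notation `f(1), …, f(n)`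
(one-indexed): `λ_{n-1}(x) = n - x(n)` and `λ_k(x) = λ_k(x̄)` for `k ≤ n - 2`, where
`x̄ ∈ S_{n-1}` is the restriction of `u⁻¹·x` (`u = s_{x(n)} ⋯ s_{n-1}`), concretely
`x̄(i) = x(i)` if `x(i) < x(n)` and `x̄(i) = x(i) - 1` if `x(i) > x(n)`. -/
def lam : ℕ → (ℕ → ℕ) → ℕ → ℕ
  | 0, _, _ => 0
  | n + 1, f, k =>
    if k = n then (n + 1) - f (n + 1)
    else lam n (fun i => if f i < f (n + 1) then f i else f i - 1) k

/-- The one-line notation of `x`, as a one-indexed function `ℕ → ℕ`. -/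
def oneline {n : ℕ} (x : Fin n → Fin n) : ℕ → ℕ :=
  fun i => if h : i - 1 < n then (x ⟨i - 1, h⟩).val + 1 else 0

/-- `y` contains the pattern `σ`. -/
def ContainsPattern {n m : ℕ} (y : Equiv.Perm (Fin n)) (σ : Equiv.Perm (Fin m)) : Prop :=
  ∃ f : Fin m → Fin n, StrictMono f ∧ ∀ j k, y (f j) < y (f k) ↔ σ j < σ k

/-- `x` is an AR (Arndt–Riehl) permutation: `x⁻¹(i) ≤ i + 1` for all `i ∈ [n]`. -/
def IsAR {n : ℕ} (x : Equiv.Perm (Fin n)) : Prop :=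
  ∀ i : Fin n, (x.symm i).val ≤ i.val + 1

/-!
Take `a = x` and `b = max x y`. Algorithm A on `x` parks every car at its preference, and so does
Algorithm B on `(x, b)`. Algorithm A on `b*` yields `y*` as soon as every spot `t` with
`y i < t ≤ x i` is taken by a later car, i.e. `i < y⁻¹ t`. If instead `y⁻¹ t < i`, avoidance of
`213` forces all values of `y` after position `i` below `t`, so all `n - t` values `≥ t` of `y`
sit before `i`, while `x` has one of them at `i`: this violates `x ≥_B y` at position `i - 1`.
-/

open Finset

variable {n : ℕ}

theorem isAOutcome_self {o : Fin n → Fin n} (ho : Function.Injective o) : IsAOutcome o o :=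
  ⟨ho, fun _ => ⟨le_rfl, fun _ h₁ h₂ => absurd (h₁.trans_lt h₂) (lt_irrefl _)⟩⟩

theorem isIPF_of_le {a b : Fin n → Fin n} (ha : Function.Injective a) (hab : ∀ i, a i ≤ b i) :
    IsIPF a b :=
  ⟨a, ha, fun i => ⟨le_rfl, hab i, fun _ h₁ h₂ => absurd (h₁.trans_lt h₂) (lt_irrefl _)⟩⟩

theorem isAOutcome_pconj {b y : Fin n → Fin n} (hy : Function.Injective y) (hyb : ∀ i, y i ≤ b i)
    (hlater : ∀ i t, y i < t → t ≤ b i → ∃ j, i < j ∧ y j = t) :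
    IsAOutcome (pconj b) (pconj y) := by
  refine ⟨fun u v h => Fin.rev_injective (hy (Fin.rev_injective h)), fun i => ⟨?_, ?_⟩⟩
  · exact Fin.rev_le_rev.2 (hyb i.rev)
  · intro s hbs hsy
    obtain ⟨j, hij, hj⟩ := hlater i.rev s.rev (Fin.lt_rev_iff.1 hsy) (Fin.rev_le_iff.1 hbs)
    exact ⟨j.rev, Fin.rev_lt_iff.2 hij, by simp [pconj, hj]⟩

theorem bcount_add_card_filter_lt (x : Equiv.Perm (Fin n)) (i j : Fin n) :
    bcount x i j + #{k | i < k ∧ j ≤ x k} = n - j := by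
  have hvalues : #{k | j ≤ x k} = n - j := by
    rw [← Fin.card_Ici j]
    exact card_nbij' x x.symm (fun k hk => by simpa using hk) (fun v hv => by simpa using hv)
      (fun k _ => by simp) (fun v _ => by simp)
  rw [bcount, ← hvalues, ← card_filter_add_card_filter_not (s := {k | j ≤ x k}) (p := (· ≤ i)),
    filter_filter, filter_filter]
  simp only [not_le, and_comm]

theorem containsPattern_213 {y : Equiv.Perm (Fin n)} {j i r : Fin n} (hji : j < i) (hir : i < r)
    (hij : y i < y j) (hjr : y j < y r) :
    ContainsPattern y (Equiv.swap 0 1 : Equiv.Perm (Fin 3)) := by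
  refine ⟨![j, i, r], ?_, ?_⟩
  · intro p q hpq
    fin_cases p <;> fin_cases q <;> simp at hpq ⊢ <;> first | assumption | exact hji.trans hir
  · intro p q
    fin_cases p <;> fin_cases q <;> simp [Equiv.swap_apply_of_ne_of_ne, hij, hjr, hij.trans hjr,
      hij.not_gt, hjr.not_gt, (hij.trans hjr).not_gt]

theorem lt_of_not_containsPattern_213 {y : Equiv.Perm (Fin n)}
    (hav : ¬ ContainsPattern y (Equiv.swap 0 1 : Equiv.Perm (Fin 3))) {j i r : Fin n}
    (hji : j < i) (hir : i < r) (hij : y i < y j) : y r < y j := by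
  refine lt_of_le_of_ne (not_lt.1 fun hjr => hav (containsPattern_213 hji hir hij hjr)) ?_
  exact y.injective.ne (hji.trans hir).ne'

theorem lt_symm_apply_of_bruhatGE {x y : Equiv.Perm (Fin n)} (hB : BruhatGE x y)
    (hav : ¬ ContainsPattern y (Equiv.swap 0 1 : Equiv.Perm (Fin 3))) {i t : Fin n}
    (hyt : y i < t) (htx : t ≤ x i) : i < y.symm t := by
  by_contra! hle
  set j := y.symm t
  have hyj : y j = t := y.apply_symm_apply t
  have hji : j < i := lt_of_le_of_ne hle fun h => by rw [h] at hyj; exact hyt.ne hyj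
  obtain ⟨i₀, hi₀⟩ : ∃ i₀ : Fin n, ∀ k, i₀ < k ↔ i ≤ k := by
    refine ⟨⟨i.val - 1, by omega⟩, fun k => ?_⟩
    have := Fin.lt_def.1 hji
    simp only [Fin.lt_def, Fin.le_def]
    omega
  have hy_tail : #{k | i₀ < k ∧ t ≤ y k} = 0 := by
    refine card_eq_zero.2 (filter_eq_empty_iff.2 fun k _ ⟨hk, htk⟩ => ?_)
    rcases ((hi₀ k).1 hk).lt_or_eq with hik | rfl
    · exact (lt_of_not_containsPattern_213 hav hji hik (hyj ▸ hyt)).not_ge (hyj ▸ htk)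
    · exact hyt.not_ge htk
  have hx_tail : 0 < #{k | i₀ < k ∧ t ≤ x k} :=
    card_pos.2 ⟨i, mem_filter.2 ⟨mem_univ _, (hi₀ i).2 le_rfl, htx⟩⟩
  have := hB i₀ t
  have := bcount_add_card_filter_lt x i₀ t
  have := bcount_add_card_filter_lt y i₀ t
  omega

/-- Theorem `thm:213-avoiding`. If `x ≥_B y` and `y` avoids the
pattern `213`, then `x ⊵_R y`. (Note `Equiv.swap 0 1 : Equiv.Perm (Fin 3)` has
one-line notation `213`.) -/
theorem stmt15 {n : ℕ} (x y : Equiv.Perm (Fin n)) (hB : BruhatGE x y)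
    (hav : ¬ ContainsPattern y (Equiv.swap 0 1 : Equiv.Perm (Fin 3))) :
    Reaches ⇑x ⇑y := by
  refine ⟨x, fun i => max (x i) (y i), isIPF_of_le x.injective fun i => le_max_left _ _,
    isAOutcome_self x.injective, isAOutcome_pconj y.injective (fun i => le_max_right _ _) ?_⟩
  intro i t hyt hbt
  have htx : t ≤ x i := (le_max_iff.1 hbt).resolve_right hyt.not_ge
  exact ⟨y.symm t, lt_symm_apply_of_bruhatGE hB hav hyt htx, y.apply_symm_apply t⟩
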